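/- Let q be a normalized central configuration in the plane with total mass M = 1 and n ≥ 4 bodies. Then max_i |q_i| ≤ (2^{1/3} + 2^{−2/3}) (n−2)^{2/3}. -/

import Mathlib

/-!
Project the configuration onto the unit vector `u` pointing at the body `qᵢ`, writing `xₖ = ⟪u, qₖ⟫`.
If `xₖ > 0` and `xⱼ` is the next lower projection, no projection lies strictly between them, so every
term of the equation for `qₖ` has `u`-component at most `mₚ / (xₖ - xⱼ)²`; hence `(xₖ - xⱼ)² xₖ ≤ 1`.
By convexity of `t ↦ t^{3/2}`, `xₖ^{3/2} - xⱼ^{3/2} ≤ (3/2) (xₖ - xⱼ) √xₖ ≤ 3/2`, so walking down from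
`qᵢ` through at most `n - 1` lower bodies gives `|qᵢ|^{3/2} ≤ (3/2) (n - 1) - 1/2 ≤ 2 (n - 2)` for
`n ≥ 4`; it remains that `2^{2/3} ≤ 2^{1/3} + 2^{-2/3}`.
-/

open Finset RealInnerProductSpace

def IsNormalizedCentralConfig {ι E : Type*} [Fintype ι] [DecidableEq ι] [NormedAddCommGroup E]
    [NormedSpace ℝ E] (m : ι → ℝ) (q : ι → E) : Prop :=
  ∀ i, q i = ∑ j ∈ univ \ {i}, (m j / ‖q i - q j‖ ^ 3) • (q i - q j)

section Projection

variable {ι E : Type*} [Fintype ι] [DecidableEq ι] [NormedAddCommGroup E] [InnerProductSpace ℝ E]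
  {m : ι → ℝ} {q : ι → E}

lemma IsNormalizedCentralConfig.inner_eq_sum (h : IsNormalizedCentralConfig m q) (u : E) (k : ι) :
    ⟪u, q k⟫ = ∑ j ∈ univ \ {k}, m j * (⟪u, q k - q j⟫ / ‖q k - q j‖ ^ 3) := by
  conv_lhs => rw [h k]
  rw [inner_sum]
  exact sum_congr rfl fun j _ => by rw [real_inner_smul_right]; ring

lemma inner_div_norm_pow_three_le {u v : E} (hu : ‖u‖ ≤ 1) {g : ℝ} (hg : 0 < g)
    (hv : ⟪u, v⟫ ∉ Set.Ioo 0 g) : ⟪u, v⟫ / ‖v‖ ^ 3 ≤ 1 / g ^ 2 := by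
  rcases le_or_gt ⟪u, v⟫ 0 with hnonpos | hpos
  · exact (div_nonpos_of_nonpos_of_nonneg hnonpos (by positivity)).trans (by positivity)
  have hgv : g ≤ ⟪u, v⟫ := not_lt.1 fun hlt => hv ⟨hpos, hlt⟩
  have hv_norm : ⟪u, v⟫ ≤ ‖v‖ :=
    (real_inner_le_norm u v).trans (mul_le_of_le_one_left (norm_nonneg v) hu)
  calc ⟪u, v⟫ / ‖v‖ ^ 3 ≤ ⟪u, v⟫ / ⟪u, v⟫ ^ 3 :=
        div_le_div_of_nonneg_left hpos.le (pow_pos hpos 3) (pow_le_pow_left₀ hpos.le hv_norm 3)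
    _ = 1 / ⟪u, v⟫ ^ 2 := by field_simp
    _ ≤ 1 / g ^ 2 := one_div_le_one_div_of_le (pow_pos hg 2) (pow_le_pow_left₀ hg.le hgv 2)

theorem IsNormalizedCentralConfig.exists_inner_lt_sq_sub_mul_le_one
    (h : IsNormalizedCentralConfig m q) (hm : ∀ i, 0 ≤ m i) (hM : ∑ i, m i ≤ 1)
    {u : E} (hu : ‖u‖ ≤ 1) (k : ι) (hk : 0 < ⟪u, q k⟫) :
    ∃ j, ⟪u, q j⟫ < ⟪u, q k⟫ ∧ (⟪u, q k⟫ - ⟪u, q j⟫) ^ 2 * ⟪u, q k⟫ ≤ 1 := by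
  have hproj := h.inner_eq_sum u k
  obtain ⟨j₀, hj₀⟩ : ∃ j, ⟪u, q j⟫ < ⟪u, q k⟫ := by
    by_contra! hge
    have : ∑ j ∈ univ \ {k}, m j * (⟪u, q k - q j⟫ / ‖q k - q j‖ ^ 3) ≤ 0 :=
      sum_nonpos fun p _ => mul_nonpos_of_nonneg_of_nonpos (hm p)
        (div_nonpos_of_nonpos_of_nonneg (by rw [inner_sub_right]; linarith [hge p])
          (by positivity))
    linarith
  obtain ⟨j, hj, hj_max⟩ := exists_max_image {p | ⟪u, q p⟫ < ⟪u, q k⟫} (fun p => ⟪u, q p⟫)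
    ⟨j₀, by simpa using hj₀⟩
  simp only [mem_filter, mem_univ, true_and] at hj hj_max
  refine ⟨j, hj, ?_⟩
  set g := ⟪u, q k⟫ - ⟪u, q j⟫
  have hg : 0 < g := sub_pos.2 hj
  have hterm (p : ι) : ⟪u, q k - q p⟫ / ‖q k - q p‖ ^ 3 ≤ 1 / g ^ 2 := by
    refine inner_div_norm_pow_three_le hu hg fun ⟨hp₀, hpg⟩ => ?_
    rw [inner_sub_right] at hp₀ hpg
    linarith [hj_max p (by linarith)]
  have hmass : ∑ p ∈ univ \ {k}, m p ≤ 1 :=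
    (sum_le_sum_of_subset_of_nonneg (subset_univ _) fun p _ _ => hm p).trans hM
  have hxk : ⟪u, q k⟫ ≤ 1 / g ^ 2 :=
    calc ⟪u, q k⟫ ≤ ∑ p ∈ univ \ {k}, m p * (1 / g ^ 2) :=
          hproj.le.trans (sum_le_sum fun p _ => mul_le_mul_of_nonneg_left (hterm p) (hm p))
      _ = (∑ p ∈ univ \ {k}, m p) / g ^ 2 := by rw [← sum_mul, mul_one_div]
      _ ≤ 1 / g ^ 2 := by gcongr
  rwa [le_div_iff₀ (pow_pos hg 2), mul_comm] at hxk

end Projection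

lemma mul_sqrt_sub_mul_sqrt_le {x y : ℝ} (hy : 0 ≤ y) (hyx : y ≤ x) :
    x * √x - y * √y ≤ 3 / 2 * ((x - y) * √x) := by
  have hx := Real.sq_sqrt (hy.trans hyx)
  have hy' := Real.sq_sqrt hy
  have key : 3 / 2 * ((x - y) * √x) - (x * √x - y * √y)
      = (√x - √y) ^ 2 * (√x + 2 * √y) / 2 := by
    linear_combination (-√x / 2) * hx + (3 / 2 * √x - √y) * hy'
  have : 0 ≤ (√x - √y) ^ 2 * (√x + 2 * √y) / 2 := by positivity
  linarith

theorem mul_sqrt_le_of_sq_sub_mul_le_one {ι : Type*} [Fintype ι] {x : ι → ℝ}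
    (h : ∀ k, 0 < x k → ∃ j, x j < x k ∧ (x k - x j) ^ 2 * x k ≤ 1) (k : ι) (hk : 0 < x k) :
    x k * √(x k) ≤ 3 / 2 * (#{p | x p < x k} : ℝ) - 1 / 2 := by
  obtain ⟨j, hjk, hgap⟩ := h k hk
  have hstep : (x k - x j) * √(x k) ≤ 1 := by
    have hsq : ((x k - x j) * √(x k)) ^ 2 ≤ 1 := by rwa [mul_pow, Real.sq_sqrt hk.le]
    nlinarith [mul_nonneg (sub_pos.2 hjk).le (Real.sqrt_nonneg (x k))]
  have hj_mem : j ∈ ({p | x p < x k} : Finset ι) := by simpa using hjk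
  rcases le_or_gt (x j) 0 with hj | hj
  · have hcard : (1 : ℝ) ≤ #{p | x p < x k} := by exact_mod_cast card_pos.2 ⟨j, hj_mem⟩
    have : x k * √(x k) ≤ (x k - x j) * √(x k) :=
      mul_le_mul_of_nonneg_right (by linarith) (Real.sqrt_nonneg _)
    linarith
  · have hcard : #{p | x p < x j} < #{p | x p < x k} := by
      refine card_lt_card ⟨fun p hp => ?_, fun hsub => ?_⟩
      · simp only [mem_filter, mem_univ, true_and] at hp ⊢
        exact hp.trans hjk
      · simpa using hsub hj_mem
    have ih := mul_sqrt_le_of_sq_sub_mul_le_one h j hj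
    have hcast : (#{p | x p < x j} : ℝ) + 1 ≤ #{p | x p < x k} := by exact_mod_cast hcard
    linarith [mul_sqrt_sub_mul_sqrt_le hj.le hjk.le]
termination_by #{p | x p < x k}

lemma le_mul_rpow_of_mul_sqrt_le {R a : ℝ} (hR : 0 ≤ R) (ha : 0 ≤ a) (h : R * √R ≤ 2 * a) :
    R ≤ ((2 : ℝ) ^ ((1 : ℝ) / 3) + (2 : ℝ) ^ (-(2 : ℝ) / 3)) * a ^ ((2 : ℝ) / 3) := by
  have hC : (2 : ℝ) ^ ((1 : ℝ) / 3) + (2 : ℝ) ^ (-(2 : ℝ) / 3) =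
      3 / 2 * (2 : ℝ) ^ ((1 : ℝ) / 3) := by
    rw [show -(2 : ℝ) / 3 = 1 / 3 - 1 by norm_num, Real.rpow_sub two_pos, Real.rpow_one]
    ring
  have hcube_two : ((2 : ℝ) ^ ((1 : ℝ) / 3)) ^ 3 = 2 := by
    rw [← Real.rpow_mul_natCast zero_le_two]; norm_num
  have hcube_a : (a ^ ((2 : ℝ) / 3)) ^ 3 = a ^ 2 := by
    rw [← Real.rpow_mul_natCast ha]; norm_num
  refine le_of_pow_le_pow_left₀ three_ne_zero (by positivity) ?_
  calc R ^ 3 = (R * √R) ^ 2 := by rw [mul_pow, Real.sq_sqrt hR]; ring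
    _ ≤ (2 * a) ^ 2 := pow_le_pow_left₀ (by positivity) h 2
    _ ≤ 27 / 4 * a ^ 2 := by nlinarith [sq_nonneg a]
    _ = _ := by rw [hC, mul_pow, mul_pow, hcube_two, hcube_a]; norm_num

theorem centralConfig_size_upper_bound_cubic_general
    (n : ℕ) (hn : 4 ≤ n)
    (q : Fin n → EuclideanSpace ℝ (Fin 2)) (m : Fin n → ℝ)
    (hm : ∀ i, 0 < m i)
    (hM : ∑ i, m i = 1)
    (hcc : ∀ i, q i = ∑ j ∈ Finset.univ \ {i},
      (m j / ‖q i - q j‖ ^ 3) • (q i - q j)) :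
    ∀ i, ‖q i‖ ≤
      ((2 : ℝ) ^ ((1 : ℝ) / 3) + (2 : ℝ) ^ (-(2 : ℝ) / 3)) *
        ((n : ℝ) - 2) ^ ((2 : ℝ) / 3) := by
  intro i
  have hn' : (4 : ℝ) ≤ n := by exact_mod_cast hn
  rcases (norm_nonneg (q i)).eq_or_lt with h0 | hpos
  · rw [← h0]
    exact mul_nonneg (by positivity) (Real.rpow_nonneg (by linarith) _)
  set u := ‖q i‖⁻¹ • q i
  have hu : ‖u‖ = 1 := norm_smul_inv_norm (norm_pos_iff.1 hpos)
  have hui : ⟪u, q i⟫ = ‖q i‖ := by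
    rw [real_inner_smul_left, real_inner_self_eq_norm_sq]; field_simp
  have hcc' : IsNormalizedCentralConfig m q := hcc
  have hdesc := mul_sqrt_le_of_sq_sub_mul_le_one
    (hcc'.exists_inner_lt_sq_sub_mul_le_one (fun p => (hm p).le) hM.le hu.le) i (hui ▸ hpos)
  rw [hui] at hdesc
  have hcard := card_lt_card (s := ({p | ⟪u, q p⟫ < ‖q i‖} : Finset (Fin n)))
    (filter_ssubset.2 ⟨i, mem_univ i, hui.not_lt⟩)
  rw [card_univ, Fintype.card_fin] at hcard
  have hcard' : (#{p | ⟪u, q p⟫ < ‖q i‖} : ℝ) + 1 ≤ n := by exact_mod_cast hcard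
  exact le_mul_rpow_of_mul_sqrt_le hpos.le (by linarith) (by linarith)

theorem centralConfig_size_upper_bound_cubic
    (n : ℕ) (hn : 4 ≤ n)
    (q : Fin n → EuclideanSpace ℝ (Fin 2)) (m : Fin n → ℝ)
    (hm : ∀ i, 0 < m i)
    (hM : ∑ i, m i = 1)
    (hq : ∀ i j, i ≠ j → q i ≠ q j)
    (hcc : ∀ i, q i = ∑ j ∈ Finset.univ \ {i},
      (m j / ‖q i - q j‖ ^ 3) • (q i - q j)) :
    ∀ i, ‖q i‖ ≤
      ((2 : ℝ) ^ ((1 : ℝ) / 3) + (2 : ℝ) ^ (-(2 : ℝ) / 3)) *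
        ((n : ℝ) - 2) ^ ((2 : ℝ) / 3) :=
  centralConfig_size_upper_bound_cubic_general n hn q m hm hM hcc
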